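/- If a ∈ p·D_k^{(p)} = {p·x mod p² : x ∈ D_k^{(p)}}, then H_b^{(p)}(β^a) = Σ_{t ∈ H_b^{(p)}} β^{a·t} equals the image of (p−1)/2 in F₂ ⊆ K, that is, it equals 1 if p ≡ 3 (mod 4) and equals 0 if p ≡ 1 (mod 4). -/

import Mathlib

open Finset Polynomial

/-- Generalized cyclotomic class `D_i^{(p)} = {g^(f·t+i) mod p : 0 ≤ t < e}`. -/
def Dp (p e f g i : ℕ) : Finset ℕ :=
  (Finset.range e).image fun t => g ^ (f * t + i) % p

/-- Generalized cyclotomic class `D_i^{(p²)} = {g^(p·f·t+i) mod p² : 0 ≤ t < e}`. -/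
def Dp2 (p e f g i : ℕ) : Finset ℕ :=
  (Finset.range e).image fun t => g ^ (p * f * t + i) % p ^ 2

/-- `p·D_i^{(p)} = {p·x mod p² : x ∈ D_i^{(p)}} ⊆ Z_{p²}`. -/
def pDp (p e f g i : ℕ) : Finset ℕ :=
  (Dp p e f g i).image fun x => p * x % p ^ 2

/-- `H_b^{(p)} = ⋃_{i=0}^{f/2-1} p·D_{(i+b) mod f}^{(p)}`. -/
def Hp (p e f g b : ℕ) : Finset ℕ :=
  (Finset.range (f / 2)).biUnion fun i => pDp p e f g ((i + b) % f)

/-- `H_b^{(p²)} = ⋃_{i=0}^{pf/2-1} D_{(i+b) mod pf}^{(p²)}`. -/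
def Hp2 (p e f g b : ℕ) : Finset ℕ :=
  (Finset.range (p * f / 2)).biUnion fun i => Dp2 p e f g ((i + b) % (p * f))

/-- The characteristic set `C₁ = H_b^{(p)} ∪ H_b^{(p²)} ∪ {0}`. -/
def C1 (p e f g b : ℕ) : Finset ℕ :=
  Hp p e f g b ∪ Hp2 p e f g b ∪ {0}

/-!
Every element of `p·D_k^{(p)}`, hence `a` and every `t ∈ H_b^{(p)}`, is a multiple of `p`,
so each `β^{a t}` is `1` and the sum is `|H_b^{(p)}|` taken in `K`. Because `g` is a primitive
root modulo `p`, the exponents `f·t + j` with `t < e`, `j < f` give `p - 1` distinct residues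
`g^{f t + j}`, so the `f/2` classes making up `H_b^{(p)}` are pairwise disjoint of size `e`,
and `|H_b^{(p)}| = (f/2)·e = (p-1)/2`.
-/

lemma natCast_zmod_sq_pow_mul_eq_one {p g d : ℕ} (h : (g : ZMod p) ^ d = 1) :
    (g : ZMod (p ^ 2)) ^ (d * p) = 1 := by
  have hdvd : (p : ℤ) ∣ (g : ℤ) ^ d - 1 := by
    rw [← ZMod.intCast_eq_intCast_iff_dvd_sub]
    push_cast
    exact h.symm
  have hdvd_sq : ((p ^ 2 : ℕ) : ℤ) ∣ ((g : ℤ) ^ d) ^ p - 1 := by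
    simpa using dvd_sub_pow_of_dvd_sub hdvd 1
  rw [← ZMod.intCast_eq_intCast_iff_dvd_sub] at hdvd_sq
  push_cast at hdvd_sq
  rw [pow_mul, ← hdvd_sq]

lemma orderOf_natCast_zmod_of_orderOf_natCast_zmod_sq {p g : ℕ} (hp : p.Prime)
    (hg : orderOf (g : ZMod (p ^ 2)) = p * (p - 1)) :
    orderOf (g : ZMod p) = p - 1 := by
  have : Fact p.Prime := ⟨hp⟩
  have hdvd_sq : orderOf (g : ZMod p) ∣ p * (p - 1) := by
    rw [← hg, ← map_natCast (ZMod.castHom (dvd_pow_self p two_ne_zero) (ZMod p)) g]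
    exact orderOf_map_dvd _ _
  have hg_ne : (g : ZMod p) ≠ 0 := by
    intro h0
    rw [h0, orderOf_eq_zero_iff'.mpr fun n hn => by simp [zero_pow hn.ne']] at hdvd_sq
    exact Nat.mul_ne_zero hp.ne_zero (by have := hp.two_le; omega) (zero_dvd_iff.mp hdvd_sq)
  refine Nat.dvd_antisymm (ZMod.orderOf_dvd_card_sub_one hg_ne) ?_
  have h := natCast_zmod_sq_pow_mul_eq_one (pow_orderOf_eq_one (g : ZMod p))
  rw [← orderOf_dvd_iff_pow_eq_one, hg, mul_comm _ p] at h
  exact Nat.dvd_of_mul_dvd_mul_left hp.pos h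

lemma mul_add_inj_of_lt {f t₁ t₂ j₁ j₂ : ℕ} (hj₁ : j₁ < f) (hj₂ : j₂ < f)
    (h : f * t₁ + j₁ = f * t₂ + j₂) : t₁ = t₂ ∧ j₁ = j₂ := by
  have hf : 0 < f := by omega
  refine ⟨?_, ?_⟩
  · simpa [Nat.mul_add_div hf, Nat.div_eq_of_lt hj₁, Nat.div_eq_of_lt hj₂] using
      congrArg (· / f) h
  · simpa [Nat.mul_add_mod, Nat.mod_eq_of_lt hj₁, Nat.mod_eq_of_lt hj₂] using
      congrArg (· % f) h

lemma natCast_pow_mod_injOn {m g : ℕ} :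
    Set.InjOn (fun u => g ^ u % m) (Set.Iio (orderOf (g : ZMod m))) := by
  intro u hu v hv h
  refine pow_injOn_Iio_orderOf hu hv ?_
  simpa using (ZMod.natCast_eq_natCast_iff' _ _ m).mpr h

section CyclotomicClasses

variable {p e f g : ℕ}

lemma pDp_eq_image (j : ℕ) :
    pDp p e f g j = (range e).image fun t => p * (g ^ (f * t + j) % p) := by
  simp only [pDp, Dp, image_image, Function.comp_def, sq, Nat.mul_mod_mul_left, Nat.mod_mod]

lemma dvd_of_mem_pDp {j x : ℕ} (hx : x ∈ pDp p e f g j) : p ∣ x := by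
  rw [pDp_eq_image] at hx
  obtain ⟨t, -, rfl⟩ := mem_image.mp hx
  exact dvd_mul_right p _

lemma mul_pow_mul_add_mod_injective (hg : orderOf (g : ZMod p) = e * f) (hp : 0 < p)
    {t₁ t₂ j₁ j₂ : ℕ} (ht₁ : t₁ < e) (ht₂ : t₂ < e) (hj₁ : j₁ < f) (hj₂ : j₂ < f)
    (h : p * (g ^ (f * t₁ + j₁) % p) = p * (g ^ (f * t₂ + j₂) % p)) :
    t₁ = t₂ ∧ j₁ = j₂ := by
  have hlt : ∀ {t j}, t < e → j < f → f * t + j ∈ Set.Iio (orderOf (g : ZMod p)) := by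
    intro t j ht hj
    rw [Set.mem_Iio, hg, mul_comm e f]
    nlinarith
  exact mul_add_inj_of_lt hj₁ hj₂
    (natCast_pow_mod_injOn (hlt ht₁ hj₁) (hlt ht₂ hj₂) (Nat.eq_of_mul_eq_mul_left hp h))

variable (hg : orderOf (g : ZMod p) = e * f) (hp : 0 < p)
include hg hp

lemma card_pDp {j : ℕ} (hj : j < f) : #(pDp p e f g j) = e := by
  rw [pDp_eq_image, card_image_of_injOn, card_range]
  intro t₁ ht₁ t₂ ht₂ h
  exact (mul_pow_mul_add_mod_injective hg hp (mem_range.mp ht₁) (mem_range.mp ht₂) hj hj h).1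

lemma disjoint_pDp {j₁ j₂ : ℕ} (hj₁ : j₁ < f) (hj₂ : j₂ < f) (hne : j₁ ≠ j₂) :
    Disjoint (pDp p e f g j₁) (pDp p e f g j₂) := by
  rw [disjoint_left]
  intro x hx₁ hx₂
  rw [pDp_eq_image] at hx₁ hx₂
  obtain ⟨t₁, ht₁, rfl⟩ := mem_image.mp hx₁
  obtain ⟨t₂, ht₂, h⟩ := mem_image.mp hx₂
  exact hne (mul_pow_mul_add_mod_injective hg hp (mem_range.mp ht₁) (mem_range.mp ht₂)
    hj₁ hj₂ h.symm).2

lemma card_Hp (b : ℕ) : #(Hp p e f g b) = f / 2 * e := by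
  have hmod : ∀ i ∈ range (f / 2), (i + b) % f < f := fun i hi =>
    Nat.mod_lt _ (by have := mem_range.mp hi; omega)
  rw [Hp, card_biUnion, sum_congr rfl fun i hi => card_pDp hg hp (hmod i hi), sum_const,
    card_range, smul_eq_mul]
  intro i₁ hi₁ i₂ hi₂ hne
  refine disjoint_pDp hg hp (hmod i₁ hi₁) (hmod i₂ hi₂) fun h => hne ?_
  have hi₁ := mem_range.mp hi₁
  have hi₂ := mem_range.mp hi₂
  have h' := Nat.ModEq.add_right_cancel' b h
  rwa [Nat.ModEq, Nat.mod_eq_of_lt (by omega), Nat.mod_eq_of_lt (by omega)] at h'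

end CyclotomicClasses

lemma sum_pow_mul_eq_card {R : Type*} [Semiring R] {β : R} {m a : ℕ} (hβ : β ^ m = 1)
    (S : Finset ℕ) (hS : ∀ t ∈ S, m ∣ a * t) : ∑ t ∈ S, β ^ (a * t) = #S := by
  rw [← nsmul_one, ← sum_const]
  refine sum_congr rfl fun t ht => ?_
  obtain ⟨c, hc⟩ := hS t ht
  rw [hc, pow_mul, hβ, one_pow]

theorem stmt_7_general (p e f r g : ℕ) (hp : p.Prime)
    (hr : 1 ≤ r) (hf : f = 2 ^ r) (hef : p - 1 = e * f)
    (hg : orderOf (g : ZMod (p ^ 2)) = p * (p - 1))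
    {K : Type*} [Field K] (β : K) (hβ : orderOf β = p ^ 2)
    (b k a : ℕ) (ha : a ∈ pDp p e f g k) :
    ∑ t ∈ Hp p e f g b, β ^ (a * t) = (((p - 1) / 2 : ℕ) : K) := by
  have hg_p : orderOf (g : ZMod p) = e * f := by
    rw [orderOf_natCast_zmod_of_orderOf_natCast_zmod_sq hp hg, hef]
  have hmul : ∀ t ∈ Hp p e f g b, p ^ 2 ∣ a * t := by
    intro t ht
    obtain ⟨i, -, hti⟩ := mem_biUnion.mp ht
    rw [sq]
    exact mul_dvd_mul (dvd_of_mem_pDp ha) (dvd_of_mem_pDp hti)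
  rw [sum_pow_mul_eq_card (hβ ▸ pow_orderOf_eq_one β) _ hmul, card_Hp hg_p hp.pos, hef]
  have h2f : 2 ∣ f := hf ▸ dvd_pow_self 2 (by omega)
  rw [Nat.mul_div_assoc e h2f, mul_comm]

theorem stmt_7 (p e f r g : ℕ) (hp : p.Prime) (hodd : Odd p)
    (hr : 1 ≤ r) (hf : f = 2 ^ r) (hef : p - 1 = e * f)
    (hg : orderOf (g : ZMod (p ^ 2)) = p * (p - 1))
    {K : Type*} [Field K] (hK : CharP K 2) (β : K) (hβ : orderOf β = p ^ 2)
    (b k a : ℕ) (ha : a ∈ pDp p e f g k) :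
    ∑ t ∈ Hp p e f g b, β ^ (a * t) = (((p - 1) / 2 : ℕ) : K) :=
  stmt_7_general p e f r g hp hr hf hef hg β hβ b k a ha
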